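/- Assume p ≡ 1 (mod 4). Then there exist λ ∈ K̄ and c ∈ (ℤ/p)* such that λ(z) = z⁻¹ for all z ∈ R and λ(z) = c·z⁻¹ for all z ∈ N. -/

import Mathlib

instance (X : Type*) [DecidableEq X] : DecidableEq (OnePoint X) :=
  inferInstanceAs (DecidableEq (Option X))

/-- The translation `z ↦ z + a` on `ℤ/p ∪ {∞}`, fixing `∞`. -/
def ptrans (p : ℕ) (a : ZMod p) : Equiv.Perm (OnePoint (ZMod p)) :=
  Equiv.optionCongr (Equiv.addRight a)

/-- The map `z ↦ a z` on `ℤ/p ∪ {∞}`, fixing `∞`, for `a ≠ 0`. -/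
def pmul (p : ℕ) [Fact p.Prime] (a : ZMod p) (ha : a ≠ 0) : Equiv.Perm (OnePoint (ZMod p)) :=
  Equiv.optionCongr (Equiv.mulLeft₀ a ha)

/-- Multiplication by `a` extended to `ℤ/p ∪ {∞}` (with `a·∞ = ∞`). -/
def opSmul (p : ℕ) (a : ZMod p) : OnePoint (ZMod p) → OnePoint (ZMod p) :=
  fun x => Option.map (fun z => a * z) x

/-- Underlying function of the map `z ↦ -1/z`. -/
def negInvFun (p : ℕ) : OnePoint (ZMod p) → OnePoint (ZMod p)
  | Option.none => Option.some (0 : ZMod p)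
  | Option.some z => if z = 0 then Option.none else Option.some (-z⁻¹ : ZMod p)

/-- The permutation `z ↦ -1/z` of `ℤ/p ∪ {∞}` (sending `0 ↦ ∞` and `∞ ↦ 0`). -/
def negInvPerm (p : ℕ) [Fact p.Prime] : Equiv.Perm (OnePoint (ZMod p)) :=
  Function.Involutive.toPerm (negInvFun p) (by
    intro x
    match x with
    | Option.none => simp [negInvFun] <;> rfl
    | Option.some z =>
      by_cases hz : z = 0
      · simp [negInvFun, hz] <;> rfl
      · have h1 : (-z⁻¹ : ZMod p) ≠ 0 := by simp [hz]
        simp [negInvFun, hz, h1, inv_neg, inv_inv] <;> rfl)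

/-- The involution `(0 ∞)(1 3)(2 6)(4 5)`. -/
def inv1 (p : ℕ) : Equiv.Perm (OnePoint (ZMod p)) :=
  Equiv.swap ((0 : ZMod p) : OnePoint (ZMod p)) OnePoint.infty *
  Equiv.swap ((1 : ZMod p) : OnePoint (ZMod p)) ((3 : ZMod p) : OnePoint (ZMod p)) *
  Equiv.swap ((2 : ZMod p) : OnePoint (ZMod p)) ((6 : ZMod p) : OnePoint (ZMod p)) *
  Equiv.swap ((4 : ZMod p) : OnePoint (ZMod p)) ((5 : ZMod p) : OnePoint (ZMod p))

/-- The involution `(0 ∞)(1 5)(2 3)(4 6)`. -/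
def inv2 (p : ℕ) : Equiv.Perm (OnePoint (ZMod p)) :=
  Equiv.swap ((0 : ZMod p) : OnePoint (ZMod p)) OnePoint.infty *
  Equiv.swap ((1 : ZMod p) : OnePoint (ZMod p)) ((5 : ZMod p) : OnePoint (ZMod p)) *
  Equiv.swap ((2 : ZMod p) : OnePoint (ZMod p)) ((3 : ZMod p) : OnePoint (ZMod p)) *
  Equiv.swap ((4 : ZMod p) : OnePoint (ZMod p)) ((6 : ZMod p) : OnePoint (ZMod p))

/-- The set of nonzero squares in `ℤ/p`. -/
def Rset (p : ℕ) : Set (ZMod p) := {a | a ≠ 0 ∧ IsSquare a}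

/-- The set of nonsquares in `(ℤ/p)*`. -/
def Nset (p : ℕ) : Set (ZMod p) := {a | a ≠ 0 ∧ ¬ IsSquare a}

/-!
The stabilizer `G_∞` has order `p(p-1)/2`, so the translations form a normal Sylow `p`-subgroup
of it. Hence every `g ∈ G_∞` is affine, `z ↦ c z + b`, and `c ^ (p(p-1)/2) = 1` together with
`c ^ p = c` gives `c ^ ((p-1)/2) = 1`: the multiplier `c` is a square. Comparing cardinalities,
`G_∞` consists of all affine maps with square multiplier.

Since `-1` is a square, every point is fixed by exactly `p` involutions of `G`, and a nontrivial
element of `G` fixes at most two points. Double counting pairs (involution, point) then shows that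
at least `(p-1)/2 = |K̄|` involutions send `0` to `∞`, so every element of `K̄` is an involution.

For `τ ∈ K̄` and a square `s`, also `z ↦ s τ(z)` lies in `K̄`; both being involutions,
`τ(s z) = s⁻¹ τ(z)`. For `u = τ(1)` the element `τ (z ↦ z - u) τ (z ↦ z + 1) τ` fixes `∞`, sends
`0 ↦ -1` and `-u ↦ 0`, so its multiplier `-u⁻¹` is a square, hence so is `u`. Then
`λ(z) = u⁻¹ τ(z)` lies in `K̄` and fixes `1`, so `λ(z) = z⁻¹` for squares `z`, and
`λ(z) = (n λ(n)) z⁻¹` for nonsquares `z`, where `n` is a fixed nonsquare.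
-/

open Equiv Finset MulAction

section PermGroup

variable {α : Type*}

def stabilizerIn (G : Subgroup (Perm α)) (x : α) : Subgroup (Perm α) :=
  G ⊓ stabilizer (Perm α) x

lemma mem_stabilizerIn {G : Subgroup (Perm α)} {x : α} {g : Perm α} :
    g ∈ stabilizerIn G x ↔ g ∈ G ∧ g x = x :=
  Iff.rfl

lemma card_stabilizerIn_mul_card (G : Subgroup (Perm α)) [IsPretransitive G α] (x : α) :
    Nat.card (stabilizerIn G x) * Nat.card α = Nat.card G := by
  have hstab : (stabilizer (Perm α) x).subgroupOf G = stabilizer G x := by ext; rfl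
  have hrel : (stabilizer (Perm α) x).relIndex G = Nat.card α := by
    rw [Subgroup.relIndex, hstab, index_stabilizer_of_transitive]
  have := Subgroup.relIndex_mul_relIndex _ _ _ (bot_le : ⊥ ≤ stabilizerIn G x) inf_le_left
  rwa [Subgroup.relIndex_bot_left, Subgroup.relIndex_bot_left, stabilizerIn,
    Subgroup.inf_relIndex_left, hrel] at this

variable [Fintype α] [DecidableEq α]

open Classical in
noncomputable def involutions (G : Subgroup (Perm α)) : Finset (Perm α) :=
  {g | g ∈ G ∧ g * g = 1 ∧ g ≠ 1}

lemma mem_involutions {G : Subgroup (Perm α)} {g : Perm α} :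
    g ∈ involutions G ↔ g ∈ G ∧ g * g = 1 ∧ g ≠ 1 := by
  simp [involutions]

lemma conj_mem_involutions {G : Subgroup (Perm α)} {σ g : Perm α} (hσ : σ ∈ G)
    (hg : g ∈ involutions G) : σ * g * σ⁻¹ ∈ involutions G := by
  obtain ⟨hgG, hgg, hg1⟩ := mem_involutions.mp hg
  refine mem_involutions.mpr ⟨G.mul_mem (G.mul_mem hσ hgG) (G.inv_mem hσ), ?_, ?_⟩
  · calc σ * g * σ⁻¹ * (σ * g * σ⁻¹) = σ * (g * g) * σ⁻¹ := by group
      _ = 1 := by rw [hgg]; group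
  · rwa [Ne, conj_eq_one_iff]

lemma card_involutions_apply_eq_conj {G : Subgroup (Perm α)} {σ : Perm α} (hσ : σ ∈ G)
    (x y : α) :
    #{g ∈ involutions G | g x = y} = #{g ∈ involutions G | g (σ x) = σ y} := by
  refine card_nbij' (fun g => σ * g * σ⁻¹) (fun g => σ⁻¹ * g * σ) ?_ ?_ ?_ ?_
  · intro g hg
    simp only [coe_filter, Set.mem_ofPred_eq] at hg ⊢
    exact ⟨conj_mem_involutions hσ hg.1, by simp [hg.2]⟩
  · intro g hg
    simp only [coe_filter, Set.mem_ofPred_eq] at hg ⊢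
    refine ⟨by simpa using conj_mem_involutions (G.inv_mem hσ) hg.1, ?_⟩
    simp [hg.2]
  · intro g _; simp [mul_assoc]
  · intro g _; simp [mul_assoc]

theorem card_mul_le_of_card_fixedPoints_le_two (J : Finset (Perm α)) (x₀ : α) {k N : ℕ}
    (hfix : ∀ g ∈ J, #{x | g x = x} ≤ 2) (hk : ∀ x, #{g ∈ J | g x = x} = k)
    (hN : ∀ y ≠ x₀, #{g ∈ J | g x₀ = y} = N) :
    Fintype.card α * k ≤ 2 * (k + (Fintype.card α - 1) * N) := by
  have hfixed : Fintype.card α * k = ∑ g ∈ J, #{x | g x = x} := by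
    calc Fintype.card α * k = ∑ x, #{g ∈ J | g x = x} := by simp [hk]
      _ = ∑ g ∈ J, #{x | g x = x} := by simp_rw [card_filter]; exact sum_comm
  have hJ : #J = k + (Fintype.card α - 1) * N := by
    rw [card_eq_sum_card_fiberwise (f := fun g => g x₀) (t := univ) (fun _ _ => mem_univ _),
      ← add_sum_erase _ _ (mem_univ x₀), hk, sum_congr rfl (fun y hy => hN y (ne_of_mem_erase hy)),
      sum_const, card_erase_of_mem (mem_univ _), card_univ, smul_eq_mul]
  calc Fintype.card α * k = ∑ g ∈ J, #{x | g x = x} := hfixed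
    _ ≤ ∑ _g ∈ J, 2 := sum_le_sum hfix
    _ = 2 * (k + (Fintype.card α - 1) * N) := by rw [sum_const, smul_eq_mul, hJ, mul_comm]

end PermGroup

lemma Subgroup.normal_of_card_eq_prime_of_index_lt {H : Type*} [Group H] [Finite H] {p : ℕ}
    [hp : Fact p.Prime] {P : Subgroup H} (hP : Nat.card P = p) (hidx : P.index < p) :
    P.Normal := by
  have hidx0 : 0 < P.index := Nat.pos_of_ne_zero P.index_ne_zero_of_finite
  have hndvd : ¬ p ∣ P.index := fun h => (Nat.le_of_dvd hidx0 h).not_gt hidx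
  let S := (IsPGroup.of_card (n := 1) (by rw [hP, pow_one])).toSylow hndvd
  have hcard : Nat.card (Sylow p H) = 1 := by
    have hmod := card_sylow_modEq_one p H
    have hle : Nat.card (Sylow p H) < p :=
      (Nat.le_of_dvd hidx0 S.card_dvd_index).trans_lt hidx
    rwa [Nat.ModEq, Nat.mod_eq_of_lt hle, Nat.mod_eq_of_lt hp.out.one_lt] at hmod
  have : Subsingleton (Sylow p H) := (Nat.card_eq_one_iff_unique.mp hcard).1
  simpa [S] using S.normal_of_subsingleton

open OnePoint

section ProjectiveLine

variable {p : ℕ} {G : Subgroup (Perm (OnePoint (ZMod p)))}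

@[simp] lemma ptrans_coe (a z : ZMod p) : ptrans p a z = ↑(z + a) := rfl

@[simp] lemma ptrans_infty (a : ZMod p) : ptrans p a ∞ = ∞ := rfl

variable (p) in
def ptransHom : Multiplicative (ZMod p) →* Perm (OnePoint (ZMod p)) where
  toFun a := ptrans p a.toAdd
  map_one' := by ext x; cases x <;> simp
  map_mul' a b := by ext x; cases x <;> simp; abel

lemma ptrans_zero : ptrans p 0 = 1 :=
  map_one (ptransHom p)

lemma ptrans_injective : Function.Injective (ptrans p) := fun a b h => by
  simpa using congr($h (0 : ZMod p))

-- Unlike `hc.1`, this elaborates to a term that `rw` can handle as a proof argument of `pmul`.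
lemma ne_zero_of_mem_Rset {c : ZMod p} (hc : c ∈ Rset p) : c ≠ 0 :=
  hc.1

def IsAffine (g : Perm (OnePoint (ZMod p))) (c b : ZMod p) : Prop :=
  g ∞ = ∞ ∧ ∀ z : ZMod p, g z = ↑(c * z + b)

lemma isAffine_one : IsAffine (1 : Perm (OnePoint (ZMod p))) 1 0 :=
  ⟨rfl, fun z => by simp⟩

namespace IsAffine

variable {g h : Perm (OnePoint (ZMod p))} {c b c' b' : ZMod p}

lemma mul (hg : IsAffine g c b) (hh : IsAffine h c' b') :
    IsAffine (g * h) (c * c') (c * b' + b) :=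
  ⟨by simp [hg.1, hh.1], fun z => by simp [hg.2, hh.2]; ring⟩

lemma pow (hg : IsAffine g c b) (n : ℕ) : ∃ b', IsAffine (g ^ n) (c ^ n) b' := by
  induction n with
  | zero => exact ⟨0, by simpa using isAffine_one⟩
  | succ n ih =>
    obtain ⟨b', hb'⟩ := ih
    exact ⟨_, by simpa [pow_succ] using hb'.mul hg⟩

lemma unique (hg : IsAffine g c b) (hg' : IsAffine g c' b') : c = c' ∧ b = b' := by
  have h0 := (hg.2 0).symm.trans (hg'.2 0)
  have h1 := (hg.2 1).symm.trans (hg'.2 1)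
  simp only [mul_zero, zero_add, mul_one, coe_eq_coe] at h0 h1
  exact ⟨by linear_combination h1 - h0, h0⟩

lemma eq_ptrans_mul_pmul [Fact p.Prime] (hg : IsAffine g c b) (hc : c ≠ 0) :
    g = ptrans p b * pmul p c hc := by
  ext x
  cases x with
  | infty => exact hg.1
  | coe z => exact hg.2 z

lemma eq_one (hg : IsAffine g 1 0) : g = 1 := by
  ext x
  cases x with
  | infty => exact hg.1
  | coe z => simp [hg.2]

lemma eq_one_of_apply_eq_self [Fact p.Prime] (hg : IsAffine g c b) {z₁ z₂ : ZMod p}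
    (hne : z₁ ≠ z₂) (h₁ : g z₁ = z₁) (h₂ : g z₂ = z₂) : g = 1 := by
  rw [hg.2, coe_eq_coe] at h₁ h₂
  have hc : c = 1 := by
    have : (c - 1) * (z₁ - z₂) = 0 := by linear_combination h₁ - h₂
    simpa [sub_eq_zero, hne] using this
  have hb : b = 0 := by linear_combination h₁ - hc * z₁
  exact (hc ▸ hb ▸ hg).eq_one

lemma eq_neg_one_of_mul_self_eq_one [Fact p.Prime] (hp2 : p ≠ 2) (hg : IsAffine g c b)
    (hgg : g * g = 1) (hg1 : g ≠ 1) : c = -1 := by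
  obtain ⟨hcc, hb⟩ := (hgg ▸ hg.mul hg).unique isAffine_one
  have hc1 : c ≠ 1 := by
    rintro rfl
    have hb0 : b = 0 := by
      have : (2 : ZMod p) * b = 0 := by linear_combination hb
      simpa [Ring.two_ne_zero (by rwa [ZMod.ringChar_zmod_n] : ringChar (ZMod p) ≠ 2)] using this
    exact hg1 (hb0 ▸ hg).eq_one
  have : (c - 1) * (c + 1) = 0 := by linear_combination hcc
  rcases mul_eq_zero.mp this with h | h
  · exact absurd (sub_eq_zero.mp h) hc1
  · exact eq_neg_of_add_eq_zero_left h

end IsAffine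

def kbar (G : Subgroup (Perm (OnePoint (ZMod p)))) : Set (Perm (OnePoint (ZMod p))) :=
  {g | g ∈ G ∧ g (0 : ZMod p) = ∞ ∧ g ∞ = (0 : ZMod p)}

lemma exists_mem_apply_zero_apply_infty (htrans : ∀ x y : OnePoint (ZMod p), ∃ g ∈ G, g x = y)
    (htransl : ∀ a, ptrans p a ∈ G) {x y : OnePoint (ZMod p)} (hxy : x ≠ y) :
    ∃ σ ∈ G, σ (0 : ZMod p) = x ∧ σ ∞ = y := by
  obtain ⟨g, hg, hgy⟩ := htrans ∞ y
  obtain ⟨v, hv⟩ := ne_infty_iff_exists.mp fun h : g⁻¹ x = ∞ =>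
    hxy (by rw [Perm.inv_eq_iff_eq.mp h, hgy])
  refine ⟨g * ptrans p v, G.mul_mem hg (htransl v), ?_, by simp [hgy]⟩
  simp [hv]

variable [hp : Fact p.Prime]

@[simp] lemma pmul_coe (c : ZMod p) (hc : c ≠ 0) (z : ZMod p) : pmul p c hc z = ↑(c * z) := rfl

@[simp] lemma pmul_infty (c : ZMod p) (hc : c ≠ 0) : pmul p c hc ∞ = ∞ := rfl

lemma pmul_inv (c : ZMod p) (hc : c ≠ 0) : (pmul p c hc)⁻¹ = pmul p c⁻¹ (inv_ne_zero hc) := by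
  rw [inv_eq_iff_mul_eq_one]
  ext x; cases x <;> simp [hc]

lemma isAffine_ptrans_mul_pmul (b c : ZMod p) (hc : c ≠ 0) :
    IsAffine (ptrans p b * pmul p c hc) c b :=
  ⟨rfl, fun _ => rfl⟩

lemma card_onePoint : Nat.card (OnePoint (ZMod p)) = p + 1 :=
  (Finite.card_option (α := ZMod p)).trans (by rw [Nat.card_zmod])

lemma div_two_eq_sub_one_div_two (hp2 : p ≠ 2) : p / 2 = (p - 1) / 2 := by
  have := Nat.odd_iff.mp (hp.out.odd_of_ne_two hp2)
  omega

lemma neg_one_mem_Rset (hp1 : p % 4 = 1) : (-1 : ZMod p) ∈ Rset p :=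
  ⟨neg_ne_zero.mpr one_ne_zero, ZMod.exists_sq_eq_neg_one_iff.mpr (by omega)⟩

lemma mul_inv_mem_Rset {z n : ZMod p} (hz : z ∈ Nset p) (hn : n ∈ Nset p) :
    z * n⁻¹ ∈ Rset p := by
  have hzn : z * n⁻¹ ≠ 0 := mul_ne_zero hz.1 (inv_ne_zero hn.1)
  have hχ : quadraticChar (ZMod p) (z * n⁻¹) * quadraticChar (ZMod p) n =
      quadraticChar (ZMod p) z := by
    rw [← map_mul, inv_mul_cancel_right₀ hn.1]
  rw [quadraticChar_neg_one_iff_not_isSquare.mpr hz.2,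
    quadraticChar_neg_one_iff_not_isSquare.mpr hn.2] at hχ
  exact ⟨hzn, (quadraticChar_one_iff_isSquare hzn).mp (by linarith)⟩

lemma card_Rset_le (hp2 : p ≠ 2) : Nat.card (Rset p) ≤ (p - 1) / 2 := by
  let f : Rset p → rootsOfUnity ((p - 1) / 2) (ZMod p) := fun c =>
    ⟨Units.mk0 c (ne_zero_of_mem_Rset c.2), by
      rw [mem_rootsOfUnity', Units.val_mk0, ← div_two_eq_sub_one_div_two hp2]
      exact (ZMod.euler_criterion p (ne_zero_of_mem_Rset c.2)).mp c.2.2⟩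
  have hf : Function.Injective f := fun c d h => Subtype.ext (by simpa [f] using h)
  have : NeZero ((p - 1) / 2) :=
    ⟨by have := hp.out.two_le; have := div_two_eq_sub_one_div_two hp2; omega⟩
  exact (Nat.card_le_card_of_injective f hf).trans (card_rootsOfUnity _ _)

lemma card_stabilizerIn_infty (hp2 : p ≠ 2)
    (htrans : ∀ x y : OnePoint (ZMod p), ∃ g ∈ G, g x = y)
    (hcard : Nat.card G = (p ^ 3 - p) / 2) :
    Nat.card (stabilizerIn G ∞) = p * ((p - 1) / 2) := by
  have : IsPretransitive G (OnePoint (ZMod p)) := ⟨fun x y =>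
    let ⟨g, hg, hgy⟩ := htrans x y
    ⟨⟨g, hg⟩, hgy⟩⟩
  have h := card_stabilizerIn_mul_card G ∞
  rw [hcard, card_onePoint] at h
  obtain ⟨k, rfl⟩ : ∃ k, p = 2 * k + 1 := by
    have := Nat.odd_iff.mp (hp.out.odd_of_ne_two hp2); exact ⟨p / 2, by omega⟩
  have hcube : (2 * k + 1) ^ 3 - (2 * k + 1) = 2 * ((2 * k + 1) * k * (2 * k + 1 + 1)) :=
    Nat.sub_eq_of_eq_add (by ring)
  rw [hcube, Nat.mul_div_cancel_left _ two_pos] at h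
  rw [show (2 * k + 1 - 1) / 2 = k by omega]
  exact Nat.eq_of_mul_eq_mul_right (by omega) h

lemma isAffine_of_mul_ptrans_one {g : Perm (OnePoint (ZMod p))} {c : ZMod p} (hg : g ∞ = ∞)
    (h : g * ptrans p 1 = ptrans p c * g) : ∃ b, IsAffine g c b := by
  obtain ⟨b, hb⟩ := ne_infty_iff_exists.mp fun h0 : g (0 : ZMod p) = ∞ =>
    coe_ne_infty (0 : ZMod p) (g.injective (h0.trans hg.symm))
  have hnat : ∀ n : ℕ, g (n : ZMod p) = ↑(c * n + b) := by
    intro n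
    induction n with
    | zero => simpa using hb.symm
    | succ n ih =>
      have := congr($h (n : ZMod p))
      simp only [Perm.mul_apply, ptrans_coe, ih] at this
      push_cast
      rw [this]
      ring_nf
  exact ⟨b, hg, fun z => by simpa using hnat z.val⟩

lemma exists_isAffine_of_mem_stabilizerIn (htransl : ∀ a, ptrans p a ∈ G)
    (hstab : Nat.card (stabilizerIn G ∞) = p * ((p - 1) / 2)) {g : Perm (OnePoint (ZMod p))}
    (hg : g ∈ stabilizerIn G ∞) : ∃ c b, IsAffine g c b := by
  set K := stabilizerIn G ∞
  have hTK : (ptransHom p).range ≤ K := by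
    rintro _ ⟨a, rfl⟩
    exact ⟨htransl _, rfl⟩
  set T := (ptransHom p).range.subgroupOf K
  have hTcard : Nat.card T = p := by
    rw [Nat.card_congr (Subgroup.subgroupOfEquivOfLe hTK).toEquiv,
      ← Nat.card_congr (MonoidHom.ofInjective (f := ptransHom p) ptrans_injective).toEquiv]
    simp
  have hidx : T.index < p := by
    have h := T.card_mul_index
    rw [hTcard, hstab] at h
    rw [Nat.eq_of_mul_eq_mul_left hp.out.pos h]
    have := hp.out.pos
    omega
  have hnormal := Subgroup.normal_of_card_eq_prime_of_index_lt hTcard hidx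
  have hconj := hnormal.conj_mem ⟨ptrans p 1, hTK ⟨Multiplicative.ofAdd 1, rfl⟩⟩
    ⟨Multiplicative.ofAdd 1, rfl⟩ ⟨g, hg⟩
  obtain ⟨c, hc⟩ := Subgroup.mem_subgroupOf.mp hconj
  exact ⟨c.toAdd, isAffine_of_mul_ptrans_one hg.2 (by
    rw [show ptrans p c.toAdd = g * ptrans p 1 * g⁻¹ from hc]; group)⟩

lemma mem_Rset_of_isAffine (hp2 : p ≠ 2) {K : Subgroup (Perm (OnePoint (ZMod p)))}
    (hK : Nat.card K = p * ((p - 1) / 2)) {g : Perm (OnePoint (ZMod p))} (hg : g ∈ K)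
    {c b : ZMod p} (h : IsAffine g c b) : c ∈ Rset p := by
  have hpow : g ^ Nat.card K = 1 := by
    have := congr(Subtype.val $(pow_card_eq_one' (x := (⟨g, hg⟩ : K))))
    simpa only [Subgroup.coe_pow, Subgroup.coe_one] using this
  obtain ⟨b', hb'⟩ := h.pow (Nat.card K)
  rw [hpow] at hb'
  have hcm : c ^ ((p - 1) / 2) = 1 := by
    simpa [hK, pow_mul, ZMod.pow_card] using (hb'.unique isAffine_one).1
  have hc : c ≠ 0 := by
    rintro rfl
    have : (p - 1) / 2 ≠ 0 := by have := hp.out.two_le; omega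
    simp [this] at hcm
  exact ⟨hc, (ZMod.euler_criterion p hc).mpr (by rwa [div_two_eq_sub_one_div_two hp2])⟩

lemma exists_mem_Rset_isAffine (hp2 : p ≠ 2) (htransl : ∀ a, ptrans p a ∈ G)
    (hstab : Nat.card (stabilizerIn G ∞) = p * ((p - 1) / 2)) {g : Perm (OnePoint (ZMod p))}
    (hg : g ∈ stabilizerIn G ∞) : ∃ c ∈ Rset p, ∃ b, IsAffine g c b := by
  obtain ⟨c, b, h⟩ := exists_isAffine_of_mem_stabilizerIn htransl hstab hg
  exact ⟨c, mem_Rset_of_isAffine hp2 hstab hg h, b, h⟩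

lemma ptrans_mul_pmul_mem (hp2 : p ≠ 2) (htransl : ∀ a, ptrans p a ∈ G)
    (hstab : Nat.card (stabilizerIn G ∞) = p * ((p - 1) / 2)) {c : ZMod p} (hc : c ∈ Rset p)
    (b : ZMod p) : ptrans p b * pmul p c (ne_zero_of_mem_Rset hc) ∈ G := by
  let φ : ZMod p × Rset p → Perm (OnePoint (ZMod p)) := fun x =>
    ptrans p x.1 * pmul p x.2 (ne_zero_of_mem_Rset x.2.2)
  have hsub : (stabilizerIn G ∞ : Set (Perm (OnePoint (ZMod p)))) ⊆ Set.range φ := by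
    intro g hg
    obtain ⟨c, hc, b, h⟩ := exists_mem_Rset_isAffine hp2 htransl hstab hg
    exact ⟨(b, ⟨c, hc⟩), (h.eq_ptrans_mul_pmul (ne_zero_of_mem_Rset hc)).symm⟩
  have hle : (Set.range φ).ncard ≤ (stabilizerIn G ∞ : Set (Perm (OnePoint (ZMod p)))).ncard := by
    rw [← Nat.card_coe_set_eq, ← Nat.card_coe_set_eq, SetLike.coe_sort_coe, hstab]
    calc Nat.card (Set.range φ) ≤ Nat.card (ZMod p × Rset p) := Finite.card_range_le φ
      _ = p * Nat.card (Rset p) := by simp [Nat.card_prod]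
      _ ≤ p * ((p - 1) / 2) := Nat.mul_le_mul_left _ (card_Rset_le hp2)
  have heq := Set.eq_of_subset_of_ncard_le hsub hle (Set.toFinite _)
  exact (heq.symm.subset ⟨(b, ⟨c, hc⟩), rfl⟩ :).1

lemma card_fixedPoints_le_two (hp2 : p ≠ 2)
    (htrans : ∀ x y : OnePoint (ZMod p), ∃ g ∈ G, g x = y) (htransl : ∀ a, ptrans p a ∈ G)
    (hstab : Nat.card (stabilizerIn G ∞) = p * ((p - 1) / 2)) {g : Perm (OnePoint (ZMod p))}
    (hg : g ∈ G) (hg1 : g ≠ 1) : #{x | g x = x} ≤ 2 := by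
  by_contra! h
  obtain ⟨x, hx, y, hy, w, hw, hxy, hxw, hyw⟩ := two_lt_card.mp h
  simp only [mem_filter, mem_univ, true_and] at hx hy hw
  obtain ⟨σ, hσ, hσx⟩ := htrans ∞ x
  have hconj : σ⁻¹ * g * σ ∈ stabilizerIn G ∞ := mem_stabilizerIn.mpr
    ⟨G.mul_mem (G.mul_mem (G.inv_mem hσ) hg) hσ, by
      rw [Perm.mul_apply, Perm.mul_apply, hσx, hx, Perm.inv_eq_iff_eq, hσx]⟩
  obtain ⟨c, -, b, hc⟩ := exists_mem_Rset_isAffine hp2 htransl hstab hconj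
  have hfinite : ∀ v, v ≠ x → ∃ z : ZMod p, σ⁻¹ v = z := fun v hv =>
    (ne_infty_iff_exists.mp fun h => hv (by rw [Perm.inv_eq_iff_eq.mp h, hσx])).imp
      fun _ => Eq.symm
  obtain ⟨z₁, hz₁⟩ := hfinite y hxy.symm
  obtain ⟨z₂, hz₂⟩ := hfinite w hxw.symm
  have hfix : ∀ v z, g v = v → σ⁻¹ v = ↑z → (σ⁻¹ * g * σ) z = z := fun v z hv hz => by
    rw [← hz]; simp [hv]
  have := hc.eq_one_of_apply_eq_self (fun h => hyw (by simpa [h, ← hz₂] using hz₁))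
    (hfix y z₁ hy hz₁) (hfix w z₂ hw hz₂)
  exact hg1 <| calc g = σ * (σ⁻¹ * g * σ) * σ⁻¹ := by group
    _ = 1 := by rw [this]; group

lemma card_involutions_fixing_infty (hp1 : p % 4 = 1) (htransl : ∀ a, ptrans p a ∈ G)
    (hstab : Nat.card (stabilizerIn G ∞) = p * ((p - 1) / 2)) :
    #{g ∈ involutions G | g ∞ = ∞} = p := by
  have hp2 : p ≠ 2 := by omega
  have hneg := neg_one_mem_Rset hp1
  have hneg_ne_one : (-1 : ZMod p) ≠ 1 :=
    Ring.neg_one_ne_one_of_char_ne_two (by rwa [ZMod.ringChar_zmod_n])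
  let f : ZMod p → Perm (OnePoint (ZMod p)) := fun b =>
    ptrans p b * pmul p (-1) (ne_zero_of_mem_Rset hneg)
  have haff : ∀ b, IsAffine (f b) (-1) b := fun b =>
    isAffine_ptrans_mul_pmul b _ (ne_zero_of_mem_Rset hneg)
  have hf : Function.Injective f := fun b b' h => by simpa [f] using congr($h (0 : ZMod p))
  suffices h : {g ∈ involutions G | g ∞ = ∞} = univ.image f by
    rw [h, card_image_of_injective _ hf, card_univ, ZMod.card]
  ext g
  simp only [mem_filter, mem_involutions, mem_image, mem_univ, true_and]
  constructor
  · rintro ⟨⟨hg, hgg, hg1⟩, hgfix⟩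
    obtain ⟨c, -, b, h⟩ := exists_mem_Rset_isAffine hp2 htransl hstab ⟨hg, hgfix⟩
    obtain rfl := h.eq_neg_one_of_mul_self_eq_one hp2 hgg hg1
    exact ⟨b, (h.eq_ptrans_mul_pmul (ne_zero_of_mem_Rset hneg)).symm⟩
  · rintro ⟨b, rfl⟩
    have hf1 : IsAffine (f b * f b) 1 0 := by simpa using (haff b).mul (haff b)
    refine ⟨⟨ptrans_mul_pmul_mem hp2 htransl hstab hneg b, hf1.eq_one, fun h1 => hneg_ne_one ?_⟩,
      rfl⟩
    exact ((h1 ▸ haff b).unique isAffine_one).1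

lemma card_involutions_fixing (hp1 : p % 4 = 1)
    (htrans : ∀ x y : OnePoint (ZMod p), ∃ g ∈ G, g x = y) (htransl : ∀ a, ptrans p a ∈ G)
    (hstab : Nat.card (stabilizerIn G ∞) = p * ((p - 1) / 2)) (x : OnePoint (ZMod p)) :
    #{g ∈ involutions G | g x = x} = p := by
  obtain ⟨σ, hσ, hσx⟩ := htrans ∞ x
  rw [← hσx, ← card_involutions_apply_eq_conj hσ]
  exact card_involutions_fixing_infty hp1 htransl hstab

lemma card_kbar_le (hp2 : p ≠ 2) (htransl : ∀ a, ptrans p a ∈ G)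
    (hstab : Nat.card (stabilizerIn G ∞) = p * ((p - 1) / 2)) {τ : Perm (OnePoint (ZMod p))}
    (hτ : τ ∈ kbar G) : (kbar G).ncard ≤ (p - 1) / 2 := by
  let f : Rset p → Perm (OnePoint (ZMod p)) := fun c => pmul p c (ne_zero_of_mem_Rset c.2) * τ⁻¹
  have hsub : kbar G ⊆ Set.range f := by
    rintro g ⟨hg, hg0, hginf⟩
    have hgτ : g * τ ∈ stabilizerIn G ∞ :=
      mem_stabilizerIn.mpr ⟨G.mul_mem hg hτ.1, by simp [hτ.2.2, hg0]⟩
    obtain ⟨c, hc, b, h⟩ := exists_mem_Rset_isAffine hp2 htransl hstab hgτ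
    have hb : b = 0 := by simpa [hτ.2.1, hginf] using (h.2 0).symm
    refine ⟨⟨c, hc⟩, ?_⟩
    have hgτ' := (hb ▸ h).eq_ptrans_mul_pmul (ne_zero_of_mem_Rset hc)
    rw [ptrans_zero, one_mul] at hgτ'
    exact (eq_mul_inv_of_mul_eq hgτ').symm
  calc (kbar G).ncard ≤ (Set.range f).ncard := Set.ncard_le_ncard hsub (Set.toFinite _)
    _ ≤ Nat.card (Rset p) := by rw [← Nat.card_coe_set_eq]; exact Finite.card_range_le f
    _ ≤ (p - 1) / 2 := card_Rset_le hp2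

theorem mul_self_eq_one_of_mem_kbar (hp1 : p % 4 = 1)
    (htrans : ∀ x y : OnePoint (ZMod p), ∃ g ∈ G, g x = y) (htransl : ∀ a, ptrans p a ∈ G)
    (hstab : Nat.card (stabilizerIn G ∞) = p * ((p - 1) / 2)) {τ : Perm (OnePoint (ZMod p))}
    (hτ : τ ∈ kbar G) : τ * τ = 1 := by
  have hp2 : p ≠ 2 := by omega
  set S : Finset (Perm (OnePoint (ZMod p))) := {g ∈ involutions G | g (0 : ZMod p) = ∞}
  have hN : ∀ y ≠ ((0 : ZMod p) : OnePoint (ZMod p)),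
      #{g ∈ involutions G | g (0 : ZMod p) = y} = #S := fun y hy => by
    obtain ⟨σ, hσ, hσ0, hσy⟩ := exists_mem_apply_zero_apply_infty htrans htransl hy.symm
    have := card_involutions_apply_eq_conj hσ (0 : ZMod p) ∞
    rw [hσ0, hσy] at this
    exact this.symm
  have hfix : ∀ g ∈ involutions G, #{x | g x = x} ≤ 2 := fun g hg => by
    obtain ⟨hgG, -, hg1⟩ := mem_involutions.mp hg
    exact card_fixedPoints_le_two hp2 htrans htransl hstab hgG hg1
  have hcount := card_mul_le_of_card_fixedPoints_le_two _ _ hfix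
    (card_involutions_fixing hp1 htrans htransl hstab) hN
  rw [Fintype.card_eq_nat_card, card_onePoint, add_tsub_cancel_right] at hcount
  have hmS : (p - 1) / 2 ≤ #S := by
    have : p * (p + 1) ≤ p * (2 + 2 * #S) := by linarith
    have := Nat.le_of_mul_le_mul_left this hp.out.pos
    omega
  have hsub : (S : Set (Perm (OnePoint (ZMod p)))) ⊆ kbar G := by
    intro g hg
    obtain ⟨⟨hgG, hgg, -⟩, hg0⟩ := (mem_filter.mp hg).imp_left mem_involutions.mp
    refine ⟨hgG, hg0, ?_⟩
    rw [← hg0, ← Perm.mul_apply, hgg, Perm.one_apply]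
  have heq := Set.eq_of_subset_of_ncard_le hsub (by
    rw [Set.ncard_coe_finset]; exact (card_kbar_le hp2 htransl hstab hτ).trans hmS)
    (Set.toFinite _)
  have hτS : τ ∈ S := by rw [← Finset.mem_coe, heq]; exact hτ
  exact (mem_involutions.mp (mem_filter.mp hτS).1).2.1

lemma pmul_mul_mem_kbar (hp2 : p ≠ 2) (htransl : ∀ a, ptrans p a ∈ G)
    (hstab : Nat.card (stabilizerIn G ∞) = p * ((p - 1) / 2)) {s : ZMod p} (hs : s ∈ Rset p)
    {τ : Perm (OnePoint (ZMod p))} (hτ : τ ∈ kbar G) :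
    pmul p s (ne_zero_of_mem_Rset hs) * τ ∈ kbar G := by
  have hs_mem : pmul p s (ne_zero_of_mem_Rset hs) ∈ G := by
    simpa [ptrans_zero] using ptrans_mul_pmul_mem hp2 htransl hstab hs 0
  exact ⟨G.mul_mem hs_mem hτ.1, by simp [hτ.2.1], by simp [hτ.2.2]⟩

lemma mul_pmul_of_mem_kbar (hp1 : p % 4 = 1)
    (htrans : ∀ x y : OnePoint (ZMod p), ∃ g ∈ G, g x = y) (htransl : ∀ a, ptrans p a ∈ G)
    (hstab : Nat.card (stabilizerIn G ∞) = p * ((p - 1) / 2)) {s : ZMod p} (hs : s ∈ Rset p)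
    {τ : Perm (OnePoint (ZMod p))} (hτ : τ ∈ kbar G) :
    τ * pmul p s (ne_zero_of_mem_Rset hs) =
      pmul p s⁻¹ (inv_ne_zero (ne_zero_of_mem_Rset hs)) * τ := by
  have hτ2 := mul_self_eq_one_of_mem_kbar hp1 htrans htransl hstab hτ
  have hsτ2 := mul_self_eq_one_of_mem_kbar hp1 htrans htransl hstab
    (pmul_mul_mem_kbar (by omega) htransl hstab hs hτ)
  set μ := pmul p s (ne_zero_of_mem_Rset hs)
  rw [← pmul_inv s (ne_zero_of_mem_Rset hs)]
  calc τ * μ = μ⁻¹ * (μ * τ * (μ * τ)) * τ⁻¹ := by group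
    _ = μ⁻¹ * τ := by rw [hsτ2, mul_one, ← mul_eq_one_iff_eq_inv.mp hτ2]

lemma apply_mul_of_mem_kbar (hp1 : p % 4 = 1)
    (htrans : ∀ x y : OnePoint (ZMod p), ∃ g ∈ G, g x = y) (htransl : ∀ a, ptrans p a ∈ G)
    (hstab : Nat.card (stabilizerIn G ∞) = p * ((p - 1) / 2)) {τ : Perm (OnePoint (ZMod p))}
    (hτ : τ ∈ kbar G) {s z w : ZMod p} (hs : s ∈ Rset p) (h : τ z = w) :
    τ ↑(s * z) = ↑(s⁻¹ * w) := by
  have := mul_pmul_of_mem_kbar hp1 htrans htransl hstab hs hτ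
  simpa [h] using congr($this (z : OnePoint (ZMod p)))

lemma isSquare_of_mem_kbar (hp1 : p % 4 = 1)
    (htrans : ∀ x y : OnePoint (ZMod p), ∃ g ∈ G, g x = y) (htransl : ∀ a, ptrans p a ∈ G)
    (hstab : Nat.card (stabilizerIn G ∞) = p * ((p - 1) / 2)) {τ : Perm (OnePoint (ZMod p))}
    (hτ : τ ∈ kbar G) {u : ZMod p} (hu : τ (1 : ZMod p) = u) : IsSquare u := by
  have hp2 : p ≠ 2 := by omega
  have hneg := neg_one_mem_Rset hp1
  have hτu : τ u = (1 : ZMod p) := by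
    rw [← hu, ← Perm.mul_apply, mul_self_eq_one_of_mem_kbar hp1 htrans htransl hstab hτ,
      Perm.one_apply]
  have hτnegu : τ (-u : ZMod p) = (-1 : ZMod p) := by
    simpa using apply_mul_of_mem_kbar hp1 htrans htransl hstab hτ hneg hτu
  set η := τ * ptrans p (-u) * τ * ptrans p 1 * τ
  have hηG : η ∈ G :=
    G.mul_mem (G.mul_mem (G.mul_mem (G.mul_mem hτ.1 (htransl _)) hτ.1) (htransl _)) hτ.1
  have hη : η ∈ stabilizerIn G ∞ := ⟨hηG, by simp [η, hτ.2.1, hτ.2.2, hu]⟩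
  obtain ⟨c, hc, b, h⟩ := exists_mem_Rset_isAffine hp2 htransl hstab hη
  have h0 : η (0 : ZMod p) = (-1 : ZMod p) := by simp [η, hτ.2.1, hτ.2.2, hτnegu]
  have hnegu : η (-u : ZMod p) = (0 : ZMod p) := by simp [η, hτ.2.1, hτ.2.2, hτnegu]
  rw [h.2, coe_eq_coe] at h0 hnegu
  have hu' : u = -1 * c⁻¹ := by
    field_simp [ne_zero_of_mem_Rset hc]
    linear_combination h0 - hnegu
  exact hu' ▸ hneg.2.mul hc.2.inv

lemma exists_mem_kbar_apply_one (hp1 : p % 4 = 1)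
    (htrans : ∀ x y : OnePoint (ZMod p), ∃ g ∈ G, g x = y) (htransl : ∀ a, ptrans p a ∈ G)
    (hstab : Nat.card (stabilizerIn G ∞) = p * ((p - 1) / 2)) :
    ∃ lam ∈ kbar G, lam (1 : ZMod p) = (1 : ZMod p) := by
  obtain ⟨τ, hτG, hτ0, hτinf⟩ :=
    exists_mem_apply_zero_apply_infty htrans htransl (infty_ne_coe (0 : ZMod p))
  have hτ : τ ∈ kbar G := ⟨hτG, hτ0, hτinf⟩
  obtain ⟨u, hu⟩ := ne_infty_iff_exists.mp fun h : τ (1 : ZMod p) = ∞ =>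
    one_ne_zero (coe_injective (τ.injective (h.trans hτ0.symm)))
  have hu0 : u ≠ 0 := by
    rintro rfl
    exact coe_ne_infty _ (τ.injective (hu.symm.trans hτinf.symm))
  have hu_inv : u⁻¹ ∈ Rset p :=
    ⟨inv_ne_zero hu0, (isSquare_of_mem_kbar hp1 htrans htransl hstab hτ hu.symm).inv⟩
  exact ⟨_, pmul_mul_mem_kbar (by omega) htransl hstab hu_inv hτ, by simp [← hu, hu0]⟩

end ProjectiveLine

theorem exists_lambda_inverting_general
    (p : ℕ) [Fact p.Prime] (hp1 : p % 4 = 1)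
    (G : Subgroup (Equiv.Perm (OnePoint (ZMod p))))
    (htrans : ∀ x y : OnePoint (ZMod p), ∃ g ∈ G, g x = y)
    (hcard : Nat.card G = (p ^ 3 - p) / 2)
    (htransl : ∀ a : ZMod p, ptrans p a ∈ G) :
    ∃ lam : Equiv.Perm (OnePoint (ZMod p)), ∃ c : ZMod p, c ≠ 0 ∧
      lam ∈ G ∧ lam (OnePoint.some (0 : ZMod p)) = OnePoint.infty ∧
      lam OnePoint.infty = OnePoint.some (0 : ZMod p) ∧
      (∀ z ∈ Rset p, lam (OnePoint.some z) = OnePoint.some z⁻¹) ∧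
      (∀ z ∈ Nset p, lam (OnePoint.some z) = OnePoint.some (c * z⁻¹)) := by
  have hp2 : p ≠ 2 := by omega
  have hstab := card_stabilizerIn_infty hp2 htrans hcard
  obtain ⟨lam, hlam, hlam1⟩ := exists_mem_kbar_apply_one hp1 htrans htransl hstab
  have hscale : ∀ {s z w : ZMod p}, s ∈ Rset p → lam z = w → lam ↑(s * z) = ↑(s⁻¹ * w) :=
    apply_mul_of_mem_kbar hp1 htrans htransl hstab hlam
  obtain ⟨n, hn⟩ := FiniteField.exists_nonsquare (F := ZMod p) (by rwa [ZMod.ringChar_zmod_n])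
  have hnN : n ∈ Nset p := ⟨fun h => hn (h ▸ IsSquare.zero), hn⟩
  obtain ⟨v, hv⟩ := ne_infty_iff_exists.mp fun h : lam n = ∞ =>
    hnN.1 (coe_injective (lam.injective (h.trans hlam.2.1.symm)))
  have hv0 : v ≠ 0 := by
    rintro rfl
    exact coe_ne_infty _ (lam.injective (hv.symm.trans hlam.2.2.symm))
  refine ⟨lam, n * v, mul_ne_zero hnN.1 hv0, hlam.1, hlam.2.1, hlam.2.2, fun z hz => ?_,
    fun z hz => ?_⟩
  · simpa using hscale hz hlam1
  · have := hscale (mul_inv_mem_Rset hz hnN) hv.symm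
    rw [inv_mul_cancel_right₀ hnN.1] at this
    rw [this]
    field_simp

theorem exists_lambda_inverting
    (p : ℕ) [Fact p.Prime] (hp2 : p ≠ 2) (hp1 : p % 4 = 1)
    (G : Subgroup (Equiv.Perm (OnePoint (ZMod p))))
    (htrans : ∀ x y : OnePoint (ZMod p), ∃ g ∈ G, g x = y)
    (hcard : Nat.card G = (p ^ 3 - p) / 2)
    (htransl : ∀ a : ZMod p, ptrans p a ∈ G) :
    ∃ lam : Equiv.Perm (OnePoint (ZMod p)), ∃ c : ZMod p, c ≠ 0 ∧
      lam ∈ G ∧ lam (OnePoint.some (0 : ZMod p)) = OnePoint.infty ∧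
      lam OnePoint.infty = OnePoint.some (0 : ZMod p) ∧
      (∀ z ∈ Rset p, lam (OnePoint.some z) = OnePoint.some z⁻¹) ∧
      (∀ z ∈ Nset p, lam (OnePoint.some z) = OnePoint.some (c * z⁻¹)) :=
  exists_lambda_inverting_general p hp1 G htrans hcard htransl
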